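/- arXiv:2201.08204 — 5 statements merged into one kernel-verified Lean document; each statement's English description precedes it below -/
import Mathlib

section
/- For every n ≥ 1 and every two vertices u, v of D_n, there is at most one directed path from u to v in D_n. -/
/-- Vertex set of the digraph `D (n+1)` from the paper (`Vtx n` = vertices of `D_{n+1}`). -/
def Vtx : ℕ → Type
  | 0 => Unit
  | (n+1) => (Fin (n+1) × Vtx n) ⊕ ((i : Fin (n+1)) → Vtx n)

/-- Edge relation of `D_{n+1}`. -/
def DEdge : (n : ℕ) → Vtx n → Vtx n → Prop
  | 0, _, _ => False
  | (n+1), Sum.inl (i, x), Sum.inl (j, y) => i = j ∧ DEdge n x y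
  | (n+1), Sum.inl (i, x), Sum.inr T => T i = x
  | (_+1), Sum.inr _, _ => False

/-- There is a directed walk of length `k` from `u` to `v`. -/
def WalkLen {V : Type*} (E : V → V → Prop) (u v : V) (k : ℕ) : Prop :=
  ∃ f : Fin (k+1) → V, f 0 = u ∧ f (Fin.last k) = v ∧
    ∀ i : Fin k, E (f i.castSucc) (f i.succ)

/-- `l` is a directed path (as a list of distinct vertices) from `u` to `v`. -/
def IsDPath {V : Type*} (E : V → V → Prop) (u v : V) (l : List V) : Prop :=
  l.Chain' E ∧ l.Nodup ∧ l.head? = some u ∧ l.getLast? = some v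

/-- Positive edges of `D'`. -/
def PosE {V : Type*} (E : V → V → Prop) (u v : V) : Prop :=
  ∃ k, k % 3 = 1 ∧ WalkLen E u v k

/-- Negative edges of `D'`. -/
def NegE {V : Type*} (E : V → V → Prop) (u v : V) : Prop :=
  ∃ k, k % 3 = 2 ∧ WalkLen E v u k

/-- Edge relation of `D_{n+1}'`. -/
def DEdge' (n : ℕ) (u v : Vtx n) : Prop :=
  PosE (DEdge n) u v ∨ NegE (DEdge n) u v

/-- Underlying undirected graph of a digraph. -/
def underSG {V : Type*} (E : V → V → Prop) : SimpleGraph V :=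
  SimpleGraph.fromRel E

/-- `G_{n+1}`, the underlying undirected graph of `D_{n+1}'`. -/
def Gn (n : ℕ) : SimpleGraph (Vtx n) := underSG (DEdge' n)

/-- A digraph is acyclic iff no vertex lies on a directed cycle. -/
def DAcyclic {V : Type*} (E : V → V → Prop) : Prop :=
  ∀ v : V, ¬ Relation.TransGen E v v

/-- `k`-dicolorability. -/
def Dicolorable {V : Type*} (E : V → V → Prop) (k : ℕ) : Prop :=
  ∃ f : V → Fin k, ∀ c : Fin k,
    DAcyclic (fun a b => E a b ∧ f a = c ∧ f b = c)

/-- `D` has an induced directed cycle of odd length at least 5. -/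
def HasInducedOddCycle {V : Type*} (E : V → V → Prop) : Prop :=
  ∃ m : ℕ, 5 ≤ m ∧ Odd m ∧ ∃ f : ZMod m → V, Function.Injective f ∧
    (∀ i, E (f i) (f (i+1))) ∧ (∀ i j, E (f i) (f j) → j = i + 1)

/-!
A vertex `v_T` has no out-edges, and every edge into a copy of `D_{n-1}` starts inside that copy.
So a directed path in `D_n` runs inside a single copy, except possibly for a last step to some
`v_T`; the copy is fixed by the first vertex and `v_T` by the last, and induction on `n` finishes.
-/

def UniqueChains {V : Type*} (E : V → V → Prop) : Prop :=
  ∀ l₁ l₂ : List V, l₁.IsChain E → l₂.IsChain E →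
    l₁.head? = l₂.head? → l₁.getLast? = l₂.getLast? → l₁ = l₂

section Chains

variable {V W : Type*} {E : V → V → Prop}

theorem List.IsChain.eq_singleton_of_head?_eq {l : List V} {s : V} (hl : l.IsChain E)
    (hs : ∀ b, ¬ E s b) (h : l.head? = some s) : l = [s] := by
  match l, hl, h with
  | [_], _, rfl => rfl
  | _ :: b :: _, hl, rfl => exact (hs b (List.isChain_cons_cons.1 hl).1).elim

theorem uniqueChains_of_forall_not (h : ∀ a b, ¬ E a b) : UniqueChains E := by
  intro l₁ l₂ h₁ h₂ hhead _
  cases hs : l₂.head? with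
  | none => rw [List.head?_eq_none_iff.1 hs, List.head?_eq_none_iff.1 (hhead.trans hs)]
  | some s =>
    rw [h₁.eq_singleton_of_head?_eq (h s) (hhead.trans hs), h₂.eq_singleton_of_head?_eq (h s) hs]

theorem List.IsChain.exists_eq_map {E' : W → W → Prop} {f : W → V}
    (hf : ∀ a y, E a (f y) → ∃ x, a = f x ∧ E' x y) {l : List V} (hl : l.IsChain E) {y : W}
    (hy : l.getLast? = some (f y)) :
    ∃ m : List W, m.IsChain E' ∧ m.getLast? = some y ∧ l = m.map f := by
  induction l with
  | nil => simp at hy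
  | cons a t ih =>
    cases t with
    | nil => exact ⟨[y], .singleton y, rfl, by simpa using hy⟩
    | cons b t =>
      obtain ⟨hab, hbt⟩ := List.isChain_cons_cons.1 hl
      obtain ⟨m, hm, hmy, hbt_eq⟩ := ih hbt (by simpa using hy)
      cases m with
      | nil => simp at hbt_eq
      | cons z m =>
        obtain ⟨rfl, rfl⟩ := List.cons_eq_cons.1 (hbt_eq.trans (List.map_cons ..))
        obtain ⟨x, rfl, hxz⟩ := hf a z hab
        exact ⟨x :: z :: m, .cons_cons hxz hm, by simpa using hmy, rfl⟩

theorem UniqueChains.eq_of_getLast?_eq_some {E' : W → W → Prop} (hE' : UniqueChains E')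
    {f : W → V} (hf_inj : Function.Injective f) (hf : ∀ a y, E a (f y) → ∃ x, a = f x ∧ E' x y)
    {l₁ l₂ : List V} (h₁ : l₁.IsChain E) (h₂ : l₂.IsChain E) (hhead : l₁.head? = l₂.head?)
    {y : W} (hy₁ : l₁.getLast? = some (f y)) (hy₂ : l₂.getLast? = some (f y)) : l₁ = l₂ := by
  obtain ⟨m₁, hm₁, hmy₁, rfl⟩ := h₁.exists_eq_map hf hy₁
  obtain ⟨m₂, hm₂, hmy₂, rfl⟩ := h₂.exists_eq_map hf hy₂
  rw [List.head?_map, List.head?_map] at hhead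
  rw [hE' m₁ m₂ hm₁ hm₂ (Option.map_injective hf_inj hhead) (hmy₁.trans hmy₂.symm)]

end Chains

namespace Vtx

variable {n : ℕ}

/-- `copy i x` is `x` in the `i`-th copy of `D_{n+1}` inside `D_{n+2}`; `join T` is `v_T`. -/
def copy (i : Fin (n+1)) (x : Vtx n) : Vtx (n+1) := Sum.inl (i, x)

def join (T : (i : Fin (n+1)) → Vtx n) : Vtx (n+1) := Sum.inr T

theorem copy_inj {i j : Fin (n+1)} {x y : Vtx n} : copy i x = copy j y ↔ i = j ∧ x = y :=
  Sum.inl_injective.eq_iff.trans Prod.mk_inj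

theorem copy_injective (i : Fin (n+1)) : Function.Injective (copy i) :=
  fun _ _ h => (copy_inj.1 h).2

end Vtx

open Vtx

variable {n : ℕ}

theorem not_dEdge_zero (a b : Vtx 0) : ¬ DEdge 0 a b := id

theorem not_dEdge_join (T : (i : Fin (n+1)) → Vtx n) (b : Vtx (n+1)) : ¬ DEdge (n+1) (join T) b :=
  id

theorem dEdge_copy_iff {a : Vtx (n+1)} {j : Fin (n+1)} {y : Vtx n} :
    DEdge (n+1) a (copy j y) ↔ ∃ x, a = copy j x ∧ DEdge n x y := by
  match a with
  | Sum.inl (i, x) =>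
    constructor
    · rintro ⟨rfl, hxy⟩
      exact ⟨x, rfl, hxy⟩
    · rintro ⟨x', hx, hxy⟩
      obtain ⟨rfl, rfl⟩ := copy_inj.1 hx
      exact ⟨rfl, hxy⟩
  | Sum.inr _ => exact ⟨False.elim, fun ⟨_, hx, _⟩ => nomatch hx⟩

theorem dEdge_join_iff {a : Vtx (n+1)} {T : (i : Fin (n+1)) → Vtx n} :
    DEdge (n+1) a (join T) ↔ ∃ i, a = copy i (T i) := by
  match a with
  | Sum.inl (i, x) =>
    constructor
    · rintro rfl
      exact ⟨i, rfl⟩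
    · rintro ⟨i', hx⟩
      obtain ⟨rfl, rfl⟩ := copy_inj.1 hx
      rfl
  | Sum.inr _ => exact ⟨False.elim, fun ⟨_, hx⟩ => nomatch hx⟩

theorem eq_singleton_join_or_exists_eq_map {l : List (Vtx (n+1))} {T : (i : Fin (n+1)) → Vtx n}
    (hl : l.IsChain (DEdge (n+1))) (hT : l.getLast? = some (join T)) :
    l = [join T] ∨ ∃ (i : Fin (n+1)) (m : List (Vtx n)),
      m.IsChain (DEdge n) ∧ m.getLast? = some (T i) ∧ l = m.map (copy i) ++ [join T] := by
  obtain ⟨l', rfl⟩ := List.getLast?_eq_some_iff.1 hT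
  obtain ⟨hl', -, hedge⟩ := List.isChain_append.1 hl
  cases hx : l'.getLast? with
  | none => simp [List.getLast?_eq_none_iff.1 hx]
  | some x =>
    obtain ⟨i, rfl⟩ := dEdge_join_iff.1 (hedge _ hx (join T) rfl)
    obtain ⟨m, hm, hmT, rfl⟩ := hl'.exists_eq_map (fun _ _ => dEdge_copy_iff.1) hx
    exact Or.inr ⟨i, m, hm, hmT, rfl⟩

theorem UniqueChains.eq_of_getLast?_eq_join (h : UniqueChains (DEdge n))
    {l₁ l₂ : List (Vtx (n+1))} (h₁ : l₁.IsChain (DEdge (n+1))) (h₂ : l₂.IsChain (DEdge (n+1)))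
    (hhead : l₁.head? = l₂.head?) {T : (i : Fin (n+1)) → Vtx n}
    (hT₁ : l₁.getLast? = some (join T)) (hT₂ : l₂.getLast? = some (join T)) : l₁ = l₂ := by
  rcases eq_singleton_join_or_exists_eq_map h₁ hT₁ with rfl | ⟨i₁, m₁, hm₁, hmT₁, rfl⟩
  · exact (h₂.eq_singleton_of_head?_eq (not_dEdge_join T) hhead.symm).symm
  rcases eq_singleton_join_or_exists_eq_map h₂ hT₂ with rfl | ⟨i₂, m₂, hm₂, hmT₂, rfl⟩
  · exact h₁.eq_singleton_of_head?_eq (not_dEdge_join T) hhead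
  cases m₁ with
  | nil => simp at hmT₁
  | cons z₁ m₁ =>
    cases m₂ with
    | nil => simp at hmT₂
    | cons z₂ m₂ =>
      obtain ⟨rfl, rfl⟩ := copy_inj.1 (Option.some_injective _ hhead)
      rw [h _ _ hm₁ hm₂ rfl (hmT₁.trans hmT₂.symm)]

theorem UniqueChains.dEdge_succ (h : UniqueChains (DEdge n)) : UniqueChains (DEdge (n+1)) := by
  intro l₁ l₂ h₁ h₂ hhead hlast
  cases hv : l₂.getLast? with
  | none => rw [List.getLast?_eq_none_iff.1 hv, List.getLast?_eq_none_iff.1 (hlast.trans hv)]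
  | some v =>
    rw [hv] at hlast
    rcases v with ⟨j, y⟩ | T
    · exact h.eq_of_getLast?_eq_some (copy_injective j) (fun _ _ => dEdge_copy_iff.1)
        h₁ h₂ hhead hlast hv
    · exact h.eq_of_getLast?_eq_join h₁ h₂ hhead hlast hv

theorem uniqueChains_dEdge : ∀ n, UniqueChains (DEdge n)
  | 0 => uniqueChains_of_forall_not not_dEdge_zero
  | n + 1 => (uniqueChains_dEdge n).dEdge_succ

/-- at most one directed path between any two vertices of `D_n`. -/
theorem Dn_unique_path (n : ℕ) (u v : Vtx n) (l₁ l₂ : List (Vtx n))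
    (h₁ : IsDPath (DEdge n) u v l₁) (h₂ : IsDPath (DEdge n) u v l₂) :
    l₁ = l₂ :=
  uniqueChains_dEdge n l₁ l₂ h₁.1 h₂.1 (h₁.2.2.1.trans h₂.2.2.1.symm)
    (h₁.2.2.2.trans h₂.2.2.2.symm)
end

section
/- The underlying undirected graph of D_n has chromatic number at least n. -/
/-!
Zykov's argument, by induction on `n`. Fix a proper colouring of `D_{n+2}`; by induction each of
its `n+1` copies of `D_{n+1}` sees a set of `n+1` distinct colours. If some vertex has a colour
outside the set `S` seen by the first copy we are done. Otherwise every copy sees exactly `S`, so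
choosing in copy `i` a vertex with the `i`-th colour of `S` gives a transversal `T` whose apex `v_T`
is adjacent to a vertex of each colour in `S`, and hence has a colour outside `S` after all.
-/

open SimpleGraph

def copyHom (n : ℕ) (i : Fin (n + 1)) : underSG (DEdge n) →g underSG (DEdge (n + 1)) where
  toFun x := Sum.inl (i, x)
  map_rel' {x y} h := by
    obtain ⟨hne, hxy⟩ := fromRel_adj _ x y |>.1 h
    exact (fromRel_adj _ _ _).2
      ⟨fun h => hne (congrArg Prod.snd (Sum.inl_injective h)), hxy.imp (⟨rfl, ·⟩) (⟨rfl, ·⟩)⟩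

lemma underSG_adj_inl_inr {n : ℕ} (T : (i : Fin (n + 1)) → Vtx n) (i : Fin (n + 1)) :
    (underSG (DEdge (n + 1))).Adj (Sum.inl (i, T i)) (Sum.inr T) :=
  (fromRel_adj _ _ _).2 ⟨Sum.inl_ne_inr, Or.inl rfl⟩

lemma exists_apex_color_notMem {n : ℕ} {α : Type*} (C : (underSG (DEdge (n + 1))).Coloring α)
    {S : Finset α} (hS : S.card = n + 1) (hcopy : ∀ i, ↑S ⊆ Set.range (C.comp (copyHom n i))) :
    ∃ T, C (Sum.inr T) ∉ S := by
  let e : Fin (n + 1) ≃ S := (S.equivFinOfCardEq hS).symm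
  choose T hT using fun i => hcopy i (e i).2
  refine ⟨T, fun hmem => ?_⟩
  set i := e.symm ⟨_, hmem⟩
  have hcolor : C (Sum.inl (i, T i)) = C (Sum.inr T) :=
    (hT i).trans (congrArg Subtype.val (e.apply_symm_apply _))
  exact C.valid (underSG_adj_inl_inr T i) hcolor

theorem exists_card_eq_subset_range_coloring (n : ℕ) {α : Type*}
    (C : (underSG (DEdge n)).Coloring α) : ∃ S : Finset α, S.card = n + 1 ∧ ↑S ⊆ Set.range C := by
  induction n with
  | zero => exact ⟨{C ()}, rfl, by simpa using ⟨(), rfl⟩⟩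
  | succ n ih =>
    classical
    choose S hcard hsub using fun i => ih (C.comp (copyHom n i))
    have hsub_range : ∀ i, ↑(S i) ⊆ Set.range C := fun i =>
      (hsub i).trans (Set.range_subset_iff.2 fun x => ⟨_, rfl⟩)
    by_cases hall : Set.range C ⊆ ↑(S 0)
    · have hS : ∀ i, S i = S 0 := fun i =>
        Finset.eq_of_subset_of_card_le (Finset.coe_subset.1 ((hsub_range i).trans hall))
          (by rw [hcard, hcard])
      obtain ⟨T, hT⟩ := exists_apex_color_notMem C (hcard 0) fun i => hS i ▸ hsub i
      exact absurd (hall ⟨_, rfl⟩) hT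
    · obtain ⟨_, ⟨u, rfl⟩, hu⟩ := Set.not_subset.1 hall
      refine ⟨insert (C u) (S 0), by rw [Finset.card_insert_of_notMem hu, hcard], ?_⟩
      rw [Finset.coe_insert]
      exact Set.insert_subset ⟨u, rfl⟩ (hsub_range 0)

/-- the underlying undirected graph of `D_{n+1}` has chromatic number
at least `n+1`. -/
theorem Dn_chromatic (n : ℕ) :
    ((n + 1 : ℕ) : ℕ∞) ≤ (underSG (DEdge n)).chromaticNumber := by
  refine le_chromaticNumber_iff_coloring.2 fun m C => ?_
  obtain ⟨S, hS, -⟩ := exists_card_eq_subset_range_coloring n C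
  simpa [hS] using S.card_le_univ
end

section
/- If u→v and v→w are edges of D_n' of the same sign, then w→u is an edge of D_n' of the opposite sign. -/
lemma walkLen_zero {V : Type*} (E : V → V → Prop) (u v : V) :
    WalkLen E u v 0 ↔ u = v := by
  constructor
  · rintro ⟨f, h0, hl, _⟩
    rw [← h0, ← hl]; rfl
  · rintro rfl
    exact ⟨fun _ => u, rfl, rfl, fun i => i.elim0⟩

lemma walkLen_succ {V : Type*} (E : V → V → Prop) (u v : V) (k : ℕ) :
    WalkLen E u v (k+1) ↔ ∃ x, WalkLen E u x k ∧ E x v := by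
  constructor
  · rintro ⟨f, h0, hl, he⟩
    refine ⟨f (Fin.last k).castSucc, ⟨fun i => f i.castSucc, h0, rfl, fun i => ?_⟩, ?_⟩
    · have := he i.castSucc
      rwa [Fin.succ_castSucc] at this
    · have := he (Fin.last k)
      rwa [Fin.succ_last, hl] at this
  · rintro ⟨x, ⟨g, h0, hl, he⟩, hxv⟩
    refine ⟨Fin.snoc g v, ?_, by simp, fun i => ?_⟩
    · rw [show (0 : Fin (k+1+1)) = Fin.castSucc 0 from rfl, Fin.snoc_castSucc]; exact h0
    refine Fin.lastCases ?_ (fun j => ?_) i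
    · simpa [Fin.snoc_castSucc, hl] using hxv
    · rw [Fin.succ_castSucc, Fin.snoc_castSucc, Fin.snoc_castSucc]
      exact he j

lemma walkLen_trans {V : Type*} (E : V → V → Prop) (u v w : V) (k l : ℕ)
    (h1 : WalkLen E u v k) (h2 : WalkLen E v w l) : WalkLen E u w (k + l) := by
  induction l generalizing w with
  | zero => rw [walkLen_zero] at h2; rwa [← h2]
  | succ l ih =>
    rw [walkLen_succ] at h2
    rw [show k + (l+1) = (k+l)+1 from rfl, walkLen_succ]
    obtain ⟨x, hx, hxw⟩ := h2
    exact ⟨x, ih x hx, hxw⟩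

/-- two consecutive edges of `D_n'` of the same sign close up into an edge
of the opposite sign. -/
theorem Dn'_sign_lemma (n : ℕ) (u v w : Vtx n) :
    (PosE (DEdge n) u v → PosE (DEdge n) v w → NegE (DEdge n) w u) ∧
    (NegE (DEdge n) u v → NegE (DEdge n) v w → PosE (DEdge n) w u) := by
  constructor
  · rintro ⟨k, hk, hwk⟩ ⟨l, hl, hwl⟩
    exact ⟨k + l, by omega, walkLen_trans _ _ _ _ _ _ hwk hwl⟩
  · rintro ⟨k, hk, hwk⟩ ⟨l, hl, hwl⟩
    exact ⟨l + k, by omega, walkLen_trans _ _ _ _ _ _ hwl hwk⟩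
end

section
/- The underlying undirected graph G_n of D_n' has clique number at most 3. -/
/-! In `D_n` all directed walks between two given vertices have the same length. Adjacent
vertices of `G_n` are joined by a walk whose length is not divisible by 3, so the vertices of a
clique are totally ordered by reachability. Measured from the first of them, walk lengths modulo 3
then separate the vertices of the clique, so it has at most three of them. -/

def HasUniqueWalkLengths {V : Type*} (E : V → V → Prop) : Prop :=
  ∀ ⦃u v : V⦄ ⦃k l : ℕ⦄, WalkLen E u v k → WalkLen E u v l → k = l

namespace WalkLen

variable {V : Type*} {E : V → V → Prop} {u v w : V} {k l : ℕ}

lemma zero_iff : WalkLen E u v 0 ↔ u = v := by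
  constructor
  · rintro ⟨f, rfl, rfl, -⟩
    rfl
  · rintro rfl
    exact ⟨fun _ => u, rfl, rfl, fun i => i.elim0⟩

lemma succ_iff : WalkLen E u v (k + 1) ↔ ∃ w, E u w ∧ WalkLen E w v k := by
  constructor
  · rintro ⟨f, rfl, rfl, hstep⟩
    exact ⟨f 1, hstep 0, f ∘ Fin.succ, rfl, rfl, fun i => hstep i.succ⟩
  · rintro ⟨w, hE, g, rfl, rfl, hstep⟩
    refine ⟨Fin.cons u g, rfl, rfl, fun i => ?_⟩
    induction i using Fin.cases with
    | zero => exact hE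
    | succ j => simpa only [← Fin.succ_castSucc, Fin.cons_succ] using hstep j

lemma append (h₁ : WalkLen E u v k) (h₂ : WalkLen E v w l) : WalkLen E u w (k + l) := by
  induction k generalizing u with
  | zero => rwa [zero_iff.mp h₁, Nat.zero_add]
  | succ k ih =>
    obtain ⟨x, hx, hw⟩ := succ_iff.mp h₁
    rw [Nat.succ_add]
    exact succ_iff.mpr ⟨x, hx, ih hw⟩

lemma eq_zero_of_forall_not_rel (hu : ∀ w, ¬ E u w) (h : WalkLen E u v k) : k = 0 ∧ v = u := by
  cases k with
  | zero => exact ⟨rfl, (zero_iff.mp h).symm⟩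
  | succ k =>
    obtain ⟨w, hw, -⟩ := succ_iff.mp h
    exact (hu w hw).elim

end WalkLen

lemma Finset.exists_mem_forall_rel_of_total {α : Type*} {R : α → α → Prop}
    (htrans : ∀ a b c, R a b → R b c → R a c) {s : Finset α} (hs : s.Nonempty)
    (htotal : ∀ a ∈ s, ∀ b ∈ s, R a b ∨ R b a) : ∃ m ∈ s, ∀ b ∈ s, R m b := by
  induction hs using Finset.Nonempty.cons_induction with
  | singleton a =>
    refine ⟨a, Finset.mem_singleton_self a, fun b hb => ?_⟩
    rw [Finset.mem_singleton.mp hb]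
    simpa using htotal a (by simp) a (by simp)
  | cons a s ha hs ih =>
    simp only [Finset.mem_cons, forall_eq_or_imp] at htotal ⊢
    obtain ⟨m, hm, hmin⟩ := ih fun b hb c hc => htotal.2 b hb |>.2 c hc
    have haa : R a a := by simpa using htotal.1.1
    rcases htotal.1.2 m hm with ham | hma
    · exact ⟨a, Or.inl rfl, haa, fun b hb => htrans a m b ham (hmin b hb)⟩
    · exact ⟨m, Or.inr hm, hma, hmin⟩

section CliqueBound

variable {V : Type*} {E : V → V → Prop}

lemma exists_walkLen_of_adj {u v : V}
    (h : (underSG fun u v => PosE E u v ∨ NegE E u v).Adj u v) :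
    ∃ k, k % 3 ≠ 0 ∧ (WalkLen E u v k ∨ WalkLen E v u k) := by
  rw [underSG, SimpleGraph.fromRel_adj] at h
  rcases h.2 with (⟨k, hk, hw⟩ | ⟨k, hk, hw⟩) | (⟨k, hk, hw⟩ | ⟨k, hk, hw⟩)
  · exact ⟨k, by omega, Or.inl hw⟩
  · exact ⟨k, by omega, Or.inr hw⟩
  · exact ⟨k, by omega, Or.inr hw⟩
  · exact ⟨k, by omega, Or.inl hw⟩

theorem HasUniqueWalkLengths.card_le_three_of_isClique (hE : HasUniqueWalkLengths E)
    {s : Finset V} (hs : (underSG fun u v => PosE E u v ∨ NegE E u v).IsClique (s : Set V)) :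
    s.card ≤ 3 := by
  rcases s.eq_empty_or_nonempty with rfl | hne
  · simp
  have htotal : ∀ u ∈ s, ∀ v ∈ s, (∃ k, WalkLen E u v k) ∨ ∃ k, WalkLen E v u k := by
    intro u hu v hv
    by_cases huv : u = v
    · exact Or.inl ⟨0, WalkLen.zero_iff.mpr huv⟩
    obtain ⟨k, -, hw | hw⟩ := exists_walkLen_of_adj (hs hu hv huv)
    exacts [Or.inl ⟨k, hw⟩, Or.inr ⟨k, hw⟩]
  obtain ⟨m, -, hm⟩ := Finset.exists_mem_forall_rel_of_total
    (fun _ _ _ ⟨k, hk⟩ ⟨l, hl⟩ => ⟨k + l, hk.append hl⟩) hne htotal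
  choose! dist hdist using hm
  have hdist_add : ∀ u ∈ s, ∀ v ∈ s, ∀ k, WalkLen E u v k → dist v = dist u + k :=
    fun u hu v hv k hk => hE (hdist v hv) ((hdist u hu).append hk)
  calc s.card ≤ (Finset.range 3).card := by
        refine Finset.card_le_card_of_injOn (fun v => dist v % 3)
          (fun v _ => Finset.mem_range.mpr (Nat.mod_lt _ (by norm_num))) ?_
        intro u hu v hv (heq : dist u % 3 = dist v % 3)
        by_contra huv
        obtain ⟨k, hk, hw | hw⟩ := exists_walkLen_of_adj (hs hu hv huv)
        · have := hdist_add u hu v hv k hw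
          omega
        · have := hdist_add v hv u hu k hw
          omega
    _ = 3 := Finset.card_range 3

end CliqueBound

lemma DEdge_walkLen_inl {n : ℕ} {i : Fin (n + 1)} {x : Vtx n} {v : Vtx (n + 1)} {k : ℕ}
    (h : WalkLen (DEdge (n + 1)) (Sum.inl (i, x)) v k) :
    (∃ y, v = Sum.inl (i, y) ∧ WalkLen (DEdge n) x y k) ∨
      ∃ T m, v = Sum.inr T ∧ k = m + 1 ∧ WalkLen (DEdge n) x (T i) m := by
  induction k generalizing x with
  | zero => exact Or.inl ⟨x, (WalkLen.zero_iff.mp h).symm, WalkLen.zero_iff.mpr rfl⟩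
  | succ k ih =>
    obtain ⟨w, hw, h'⟩ := WalkLen.succ_iff.mp h
    rcases w with ⟨j, y⟩ | T
    · obtain ⟨rfl, hxy⟩ : i = j ∧ DEdge n x y := hw
      rcases ih h' with ⟨z, rfl, hz⟩ | ⟨T, m, rfl, rfl, hm⟩
      · exact Or.inl ⟨z, rfl, WalkLen.succ_iff.mpr ⟨y, hxy, hz⟩⟩
      · exact Or.inr ⟨T, m + 1, rfl, rfl, WalkLen.succ_iff.mpr ⟨y, hxy, hm⟩⟩
    · have hTx : T i = x := hw
      obtain ⟨rfl, rfl⟩ := h'.eq_zero_of_forall_not_rel fun _ h => h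
      exact Or.inr ⟨T, 0, rfl, rfl, WalkLen.zero_iff.mpr hTx.symm⟩

theorem hasUniqueWalkLengths_DEdge (n : ℕ) : HasUniqueWalkLengths (DEdge n) := by
  induction n with
  | zero =>
    intro u v k l hk hl
    obtain ⟨rfl, -⟩ := hk.eq_zero_of_forall_not_rel fun _ h => h
    obtain ⟨rfl, -⟩ := hl.eq_zero_of_forall_not_rel fun _ h => h
    rfl
  | succ n ih =>
    rintro (⟨i, x⟩ | T) v k l hk hl
    · rcases DEdge_walkLen_inl hk with ⟨y, rfl, hy⟩ | ⟨T, m, rfl, rfl, hm⟩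
      · rcases DEdge_walkLen_inl hl with ⟨y', hy', hy'l⟩ | ⟨_, _, hT, -, -⟩
        · obtain rfl : y = y' := (Prod.mk.inj (Sum.inl.inj hy')).2
          exact ih hy hy'l
        · exact (Sum.inl_ne_inr hT).elim
      · rcases DEdge_walkLen_inl hl with ⟨_, hy, -⟩ | ⟨T', m', hT, rfl, hm'⟩
        · exact (Sum.inr_ne_inl hy).elim
        · obtain rfl := Sum.inr.inj hT
          rw [ih hm hm']
    · obtain ⟨rfl, -⟩ := hk.eq_zero_of_forall_not_rel fun _ h => h
      obtain ⟨rfl, -⟩ := hl.eq_zero_of_forall_not_rel fun _ h => h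
      rfl

/-- `G_n` has clique number at most 3, i.e. contains no 4-clique. -/
theorem Gn_clique (n : ℕ) (s : Finset (Vtx n)) : ¬ (Gn n).IsNClique 4 s := by
  intro hs
  have hcard := (hasUniqueWalkLengths_DEdge n).card_le_three_of_isClique hs.isClique
  rw [hs.card_eq] at hcard
  omega
end

section
/- Let D be a simple digraph whose edges are partitioned into positive and negative edges such that no two consecutive edges (u→v followed by v→w) have the same sign. Then the underlying undirected graph of D has chromatic number at most 4. -/
/-- a simple digraph whose edges are signed with no two consecutive edges
of the same sign has 4-colorable underlying graph. -/
theorem signed_4_colorable (V : Type) (P N : V → V → Prop)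
    (hdisj : ∀ u v, ¬ (P u v ∧ N u v))
    (hirr : ∀ v, ¬ (P v v ∨ N v v))
    (hsimple : ∀ u v, (P u v ∨ N u v) → ¬ (P v u ∨ N v u))
    (hP : ∀ u v w, ¬ (P u v ∧ P v w))
    (hN : ∀ u v w, ¬ (N u v ∧ N v w)) :
    (SimpleGraph.fromRel (fun a b => P a b ∨ N a b)).Colorable 4 := by
  classical
  have key : ∀ u v : V, P u v ∨ N u v →
      ((∃ w, P u w) ∧ ¬ (∃ w, P v w)) ∨ ((∃ w, N u w) ∧ ¬ (∃ w, N v w)) := by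
    rintro u v (h | h)
    · exact Or.inl ⟨⟨v, h⟩, fun ⟨w, hw⟩ => hP u v w ⟨h, hw⟩⟩
    · exact Or.inr ⟨⟨v, h⟩, fun ⟨w, hw⟩ => hN u v w ⟨h, hw⟩⟩
  have : (SimpleGraph.fromRel (fun a b => P a b ∨ N a b)).Colorable
      (Fintype.card (Bool × Bool)) := by
    apply SimpleGraph.Coloring.colorable
    refine SimpleGraph.Coloring.mk
      (fun v => (decide (∃ w, P v w), decide (∃ w, N v w))) ?_
    rintro u v ⟨hne, h⟩ heq
    have h1 : decide (∃ w, P u w) = decide (∃ w, P v w) := congrArg Prod.fst heq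
    have h2 : decide (∃ w, N u w) = decide (∃ w, N v w) := congrArg Prod.snd heq
    rcases h with h | h
    · rcases key u v h with ⟨ha, hb⟩ | ⟨ha, hb⟩
      · simp [ha, hb] at h1
      · simp [ha, hb] at h2
    · rcases key v u h with ⟨ha, hb⟩ | ⟨ha, hb⟩
      · simp [ha, hb] at h1
      · simp [ha, hb] at h2
  simpa using this
end
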